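/- Let q>1 and s∈ℝ. A sequence m=(m_p)_{p≥0} of positive real numbers is of q-Gevrey order s if and only if it is of generalized q-Gevrey order s; that is, there exist a,A>0 and α,β∈ℝ with a^p·(p!)^α·q^{s·p(p−1)/2} ≤ m_p ≤ A^p·(p!)^β·q^{s·p(p−1)/2} for all p if and only if there exist a,A>0 and a sequence (M_p) of positive reals with M_0=1 satisfying (mg) and (lc) such that a^p·(1/M_p)·q^{s·p(p−1)/2} ≤ m_p ≤ A^p·M_p·q^{s·p(p−1)/2} for all p. -/
import Mathlib

open Real

lemma aux_choose_le_two_pow (n k : ℕ) : n.choose k ≤ 2 ^ n := by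
  rcases le_or_gt k n with h | h
  · calc n.choose k ≤ ∑ i ∈ Finset.range (n + 1), n.choose i :=
        Finset.single_le_sum (fun i _ => Nat.zero_le _)
          (Finset.mem_range.mpr (by omega))
      _ = 2 ^ n := Nat.sum_range_choose n
  · simp [Nat.choose_eq_zero_of_lt h]

lemma aux_two_pow_le_cb (k : ℕ) : 2 ^ k ≤ Nat.centralBinom k := by
  induction k with
  | zero => simp [Nat.centralBinom_zero]
  | succ n ih =>
    have h := Nat.succ_mul_centralBinom_succ n
    have h2 : (n + 1) * 2 ^ (n + 1) ≤ (n + 1) * Nat.centralBinom (n + 1) := by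
      rw [h]
      calc (n + 1) * 2 ^ (n + 1) = 2 * (n + 1) * 2 ^ n := by ring
        _ ≤ 2 * (2 * n + 1) * Nat.centralBinom n := Nat.mul_le_mul (by omega) ih
    exact Nat.le_of_mul_le_mul_left h2 n.succ_pos

/-- key real inequality: if `j ≤ 3 t` and `2^t ≤ N` then `C^j ≤ N ^ (3 logb 2 C)`. -/
lemma aux_key (C : ℝ) (hC : 2 ≤ C) (j t : ℕ) (hjt : j ≤ 3 * t) (N : ℕ) (hN : 2 ^ t ≤ N) :
    C ^ j ≤ (N : ℝ) ^ (3 * Real.logb 2 C) := by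
  have hC0 : (0 : ℝ) < C := by linarith
  have hb : (1 : ℝ) ≤ Real.logb 2 C := by
    have := Real.logb_le_logb_of_le (b := 2) one_lt_two (by norm_num : (0:ℝ) < 2) hC
    simpa using this
  have hCe : (2 : ℝ) ^ (Real.logb 2 C) = C :=
    Real.rpow_logb (by norm_num) (by norm_num) hC0
  have hN' : ((2 : ℝ) ^ (t : ℕ)) ≤ (N : ℝ) := by exact_mod_cast hN
  calc C ^ j = ((2 : ℝ) ^ (Real.logb 2 C)) ^ (j : ℕ) := by rw [hCe]
    _ = (2 : ℝ) ^ (Real.logb 2 C * j) := by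
        rw [← Real.rpow_natCast ((2:ℝ) ^ (Real.logb 2 C)) j, ← Real.rpow_mul (by norm_num)]
    _ ≤ (2 : ℝ) ^ ((t : ℝ) * (3 * Real.logb 2 C)) := by
        apply Real.rpow_le_rpow_of_exponent_le one_le_two
        have hj : (j : ℝ) ≤ 3 * (t : ℝ) := by
          have h3 : ((j : ℕ) : ℝ) ≤ ((3 * t : ℕ) : ℝ) := Nat.cast_le.mpr hjt
          push_cast at h3; linarith
        nlinarith [hb, hj, (Nat.cast_nonneg j : (0:ℝ) ≤ (j:ℝ))]
    _ = ((2 : ℝ) ^ (t : ℕ)) ^ (3 * Real.logb 2 C) := by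
        rw [← Real.rpow_natCast (2:ℝ) t, ← Real.rpow_mul (by norm_num)]
    _ ≤ (N : ℝ) ^ (3 * Real.logb 2 C) := by
        apply Real.rpow_le_rpow (by positivity) hN' (by linarith)

/-- Upper bound for a moderate-growth sequence: `M p ≤ B^p * (p!)^β`. -/
lemma aux_M_upper (M : ℕ → ℝ) (hMpos : ∀ p, 0 < M p) (hM0 : M 0 = 1)
    (C : ℝ) (hC : 2 ≤ C) (hmg : ∀ n k : ℕ, M (n + k) ≤ C ^ (n + k) * M n * M k) :
    ∀ p : ℕ, M p ≤ (max (M 1) 1) ^ p * (p.factorial : ℝ) ^ (3 * Real.logb 2 C) := by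
  set B := max (M 1) 1 with hB
  set β := 3 * Real.logb 2 C with hβ
  have hB1 : (1 : ℝ) ≤ B := le_max_right _ _
  have hB0 : (0 : ℝ) < B := by linarith
  have hC0 : (0 : ℝ) < C := by linarith
  have hβ0 : 0 ≤ β := by
    have hb : (1 : ℝ) ≤ Real.logb 2 C := by
      have := Real.logb_le_logb_of_le (b := 2) one_lt_two (by norm_num : (0:ℝ) < 2) hC
      simpa using this
    rw [hβ]; linarith
  intro p
  induction p using Nat.strong_induction_on with
  | _ p ih =>
    match p, ih with
    | 0, _ => simp [hM0]
    | 1, _ =>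
      simp only [Nat.factorial_one, Nat.cast_one, Real.one_rpow, pow_one, mul_one]
      exact le_max_left _ _
    | (n + 2), ih =>
      rcases Nat.even_or_odd (n + 2) with ⟨k, hk⟩ | ⟨k, hk⟩
      · -- even case, n + 2 = k + k, k ≥ 1
        have hk1 : 1 ≤ k := by omega
        have hkl : k < n + 2 := by omega
        have hMk := ih k hkl
        -- factorial identity
        have hfact : (k + k).factorial = (k + k).choose k * k.factorial * k.factorial := by
          have := Nat.choose_mul_factorial_mul_factorial (show k ≤ k + k by omega)
          simpa [Nat.add_sub_cancel] using this.symm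
        have hcb : 2 ^ k ≤ (k + k).choose k := by
          have := aux_two_pow_le_cb k
          rwa [Nat.centralBinom, two_mul] at this
        have hkey : C ^ (k + k) ≤ ((k + k).choose k : ℝ) ^ β :=
          aux_key C hC (k + k) k (by omega) _ hcb
        have hfk : (0:ℝ) < (k.factorial : ℝ) := by positivity
        have hstep : M (n + 2) ≤ C ^ (k + k) * M k * M k := by
          rw [hk]; exact hmg k k
        calc M (n + 2) ≤ C ^ (k + k) * M k * M k := hstep
          _ ≤ C ^ (k + k) * (B ^ k * (k.factorial : ℝ) ^ β) * (B ^ k * (k.factorial : ℝ) ^ β) := by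
              gcongr <;> first | positivity | exact hMk | exact (hMpos _).le
          _ = B ^ (k + k) * (C ^ (k + k) * ((k.factorial : ℝ) ^ β * (k.factorial : ℝ) ^ β)) := by
              rw [pow_add]; ring
          _ ≤ B ^ (k + k) * (((k + k).choose k : ℝ) ^ β * ((k.factorial : ℝ) ^ β * (k.factorial : ℝ) ^ β)) := by
              gcongr
          _ = B ^ (k + k) * (((k + k).factorial : ℝ)) ^ β := by
              rw [hfact]
              push_cast
              rw [Real.mul_rpow (by positivity) (by positivity),
                Real.mul_rpow (by positivity) (by positivity)]
              ring
          _ = B ^ (n + 2) * ((n + 2).factorial : ℝ) ^ β := by rw [hk]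
      · -- odd case, n + 2 = 2k + 1 = k + (k + 1), k ≥ 1
        have hk1 : 1 ≤ k := by omega
        have hkeq : n + 2 = k + (k + 1) := by omega
        have hMk := ih k (by omega)
        have hMk1 := ih (k + 1) (by omega)
        have hfact : (k + (k + 1)).factorial
            = (k + (k + 1)).choose k * k.factorial * (k + 1).factorial := by
          have := Nat.choose_mul_factorial_mul_factorial (show k ≤ k + (k + 1) by omega)
          have h2 : k + (k + 1) - k = k + 1 := by omega
          rw [h2] at this
          exact this.symm
        have hcb : 2 ^ k ≤ (k + (k + 1)).choose k := by
          have h1 := aux_two_pow_le_cb k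
          rw [Nat.centralBinom] at h1
          exact h1.trans (Nat.choose_le_choose k (by omega))
        have hkey : C ^ (k + (k + 1)) ≤ ((k + (k + 1)).choose k : ℝ) ^ β :=
          aux_key C hC (k + (k + 1)) k (by omega) _ hcb
        have hstep : M (n + 2) ≤ C ^ (k + (k + 1)) * M k * M (k + 1) := by
          rw [hkeq]; exact hmg k (k + 1)
        calc M (n + 2) ≤ C ^ (k + (k + 1)) * M k * M (k + 1) := hstep
          _ ≤ C ^ (k + (k + 1)) * (B ^ k * (k.factorial : ℝ) ^ β)
              * (B ^ (k + 1) * ((k + 1).factorial : ℝ) ^ β) := by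
              gcongr <;> first | positivity | exact hMk | exact hMk1 | exact (hMpos _).le
          _ = B ^ (k + (k + 1)) * (C ^ (k + (k + 1))
              * ((k.factorial : ℝ) ^ β * ((k + 1).factorial : ℝ) ^ β)) := by
              rw [pow_add]; ring
          _ ≤ B ^ (k + (k + 1)) * (((k + (k + 1)).choose k : ℝ) ^ β
              * ((k.factorial : ℝ) ^ β * ((k + 1).factorial : ℝ) ^ β)) := by
              gcongr
          _ = B ^ (k + (k + 1)) * (((k + (k + 1)).factorial : ℝ)) ^ β := by
              rw [hfact]
              push_cast
              rw [Real.mul_rpow (by positivity) (by positivity),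
                Real.mul_rpow (by positivity) (by positivity)]
              ring
          _ = B ^ (n + 2) * ((n + 2).factorial : ℝ) ^ β := by rw [hkeq]

/-- a sequence of positive reals is of `q`-Gevrey order `s` iff it is of
(generalized) `q`-Gevrey order `s`. -/
theorem stmt4 (q s : ℝ) (hq : 1 < q) (m : ℕ → ℝ) (hm : ∀ p : ℕ, 0 < m p) :
    (∃ a A α β : ℝ, 0 < a ∧ 0 < A ∧ ∀ p : ℕ,
        a ^ p * (p.factorial : ℝ) ^ α * q ^ (s * ((p * (p - 1) : ℕ) : ℝ) / 2) ≤ m p ∧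
        m p ≤ A ^ p * (p.factorial : ℝ) ^ β * q ^ (s * ((p * (p - 1) : ℕ) : ℝ) / 2)) ↔
    (∃ a A : ℝ, ∃ M : ℕ → ℝ, 0 < a ∧ 0 < A ∧ (∀ p : ℕ, 0 < M p) ∧ M 0 = 1 ∧
        (∃ C : ℝ, 0 < C ∧ ∀ n k : ℕ, M (n + k) ≤ C ^ (n + k) * M n * M k) ∧
        (∀ n : ℕ, 1 ≤ n → (M n) ^ 2 ≤ M (n - 1) * M (n + 1)) ∧
        (∀ p : ℕ,
          a ^ p * (M p)⁻¹ * q ^ (s * ((p * (p - 1) : ℕ) : ℝ) / 2) ≤ m p ∧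
          m p ≤ A ^ p * M p * q ^ (s * ((p * (p - 1) : ℕ) : ℝ) / 2))) := by
  have hq0 : (0 : ℝ) < q := by linarith
  constructor
  · rintro ⟨a, A, α, β, ha, hA, h⟩
    set γ := max (max (-α) β) 0 with hγ
    have hγ0 : 0 ≤ γ := le_max_right _ _
    have hγα : -α ≤ γ := le_trans (le_max_left _ _) (le_max_left _ _)
    have hγβ : β ≤ γ := le_trans (le_max_right _ _) (le_max_left _ _)
    refine ⟨a, A, fun p => (p.factorial : ℝ) ^ γ, ha, hA, fun p => by positivity, by simp,
      ⟨(2 : ℝ) ^ γ, by positivity, ?_⟩, ?_, ?_⟩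
    · -- moderate growth
      intro n k
      have h1 : (n + k).factorial ≤ 2 ^ (n + k) * n.factorial * k.factorial := by
        have h2 : (n + k).factorial = (n + k).choose n * n.factorial * k.factorial := by
          have := Nat.choose_mul_factorial_mul_factorial (show n ≤ n + k by omega)
          simpa [Nat.add_sub_cancel_left] using this.symm
        rw [h2]
        exact Nat.mul_le_mul (Nat.mul_le_mul (aux_choose_le_two_pow _ _) le_rfl) le_rfl
      have h1' : (((n + k).factorial : ℝ)) ≤ (2 : ℝ) ^ (n + k) * n.factorial * k.factorial := by
        exact_mod_cast h1
      calc ((n + k).factorial : ℝ) ^ γ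
          ≤ ((2 : ℝ) ^ (n + k) * n.factorial * k.factorial) ^ γ :=
            Real.rpow_le_rpow (by positivity) h1' hγ0
        _ = ((2 : ℝ) ^ (n + k)) ^ γ * (n.factorial : ℝ) ^ γ * (k.factorial : ℝ) ^ γ := by
            rw [Real.mul_rpow (by positivity) (by positivity),
              Real.mul_rpow (by positivity) (by positivity)]
        _ = ((2 : ℝ) ^ γ) ^ (n + k) * (n.factorial : ℝ) ^ γ * (k.factorial : ℝ) ^ γ := by
            rw [← Real.rpow_natCast (2:ℝ) (n + k), ← Real.rpow_mul (by norm_num),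
              mul_comm ((n + k : ℕ) : ℝ) γ, Real.rpow_mul (by norm_num),
              Real.rpow_natCast]
    · -- log convexity
      intro n hn
      have h1 : n.factorial * n.factorial ≤ (n - 1).factorial * (n + 1).factorial := by
        obtain ⟨j, rfl⟩ : ∃ j, n = j + 1 := ⟨n - 1, by omega⟩
        simp only [Nat.add_sub_cancel]
        rw [Nat.factorial_succ (j + 1), Nat.factorial_succ j]
        calc (j + 1) * j.factorial * ((j + 1) * j.factorial)
            = (j + 1) * ((j + 1) * (j.factorial * j.factorial)) := by ring
          _ ≤ (j + 1 + 1) * ((j + 1) * (j.factorial * j.factorial)) :=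
              Nat.mul_le_mul (by omega) le_rfl
          _ = j.factorial * ((j + 1 + 1) * ((j + 1) * j.factorial)) := by ring
      have h1' : ((n.factorial : ℝ)) * n.factorial
          ≤ ((n - 1).factorial : ℝ) * (n + 1).factorial := by exact_mod_cast h1
      calc ((n.factorial : ℝ) ^ γ) ^ 2 = ((n.factorial : ℝ) * n.factorial) ^ γ := by
            rw [sq, ← Real.mul_rpow (by positivity) (by positivity)]
        _ ≤ (((n - 1).factorial : ℝ) * (n + 1).factorial) ^ γ :=
            Real.rpow_le_rpow (by positivity) h1' hγ0
        _ = ((n - 1).factorial : ℝ) ^ γ * ((n + 1).factorial : ℝ) ^ γ := by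
            rw [Real.mul_rpow (by positivity) (by positivity)]
    · -- bounds
      intro p
      obtain ⟨hl, hu⟩ := h p
      have hf1 : (1 : ℝ) ≤ (p.factorial : ℝ) := Nat.one_le_cast.mpr p.factorial_pos
      constructor
      · calc a ^ p * ((p.factorial : ℝ) ^ γ)⁻¹ * q ^ (s * ((p * (p - 1) : ℕ) : ℝ) / 2)
            = a ^ p * (p.factorial : ℝ) ^ (-γ) * q ^ (s * ((p * (p - 1) : ℕ) : ℝ) / 2) := by
              rw [Real.rpow_neg (by positivity)]
          _ ≤ a ^ p * (p.factorial : ℝ) ^ α * q ^ (s * ((p * (p - 1) : ℕ) : ℝ) / 2) :=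
              mul_le_mul_of_nonneg_right
                (mul_le_mul_of_nonneg_left
                  (Real.rpow_le_rpow_of_exponent_le hf1 (by linarith)) (by positivity))
                (by positivity)
          _ ≤ m p := hl
      · calc m p ≤ A ^ p * (p.factorial : ℝ) ^ β * q ^ (s * ((p * (p - 1) : ℕ) : ℝ) / 2) := hu
          _ ≤ A ^ p * (p.factorial : ℝ) ^ γ * q ^ (s * ((p * (p - 1) : ℕ) : ℝ) / 2) :=
              mul_le_mul_of_nonneg_right
                (mul_le_mul_of_nonneg_left
                  (Real.rpow_le_rpow_of_exponent_le hf1 hγβ) (by positivity))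
                (by positivity)
  · rintro ⟨a, A, M, ha, hA, hMpos, hM0, ⟨C, hC, hmg⟩, _hlc, hb⟩
    set C' := max C 2 with hC'
    have hC'2 : (2 : ℝ) ≤ C' := le_max_right _ _
    have hmg' : ∀ n k : ℕ, M (n + k) ≤ C' ^ (n + k) * M n * M k := by
      intro n k
      refine (hmg n k).trans ?_
      gcongr <;> first | exact (hMpos _).le | exact le_max_left _ _
    set B := max (M 1) 1 with hBdef
    set β := 3 * Real.logb 2 C' with hβdef
    have hB1 : (1 : ℝ) ≤ B := le_max_right _ _
    have hB0 : (0 : ℝ) < B := by linarith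
    have hup := aux_M_upper M hMpos hM0 C' hC'2 hmg'
    refine ⟨a / B, A * B, -β, β, by positivity, by positivity, fun p => ?_⟩
    obtain ⟨hl, hu⟩ := hb p
    have hMub : M p ≤ B ^ p * (p.factorial : ℝ) ^ β := hup p
    have hQ : (0 : ℝ) < q ^ (s * ((p * (p - 1) : ℕ) : ℝ) / 2) := by positivity
    constructor
    · have hinv : (B ^ p * (p.factorial : ℝ) ^ β)⁻¹ ≤ (M p)⁻¹ := by
        exact inv_anti₀ (hMpos p) hMub
      calc (a / B) ^ p * (p.factorial : ℝ) ^ (-β) * q ^ (s * ((p * (p - 1) : ℕ) : ℝ) / 2)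
          = a ^ p * (B ^ p * (p.factorial : ℝ) ^ β)⁻¹ * q ^ (s * ((p * (p - 1) : ℕ) : ℝ) / 2) := by
            rw [div_pow, Real.rpow_neg (by positivity), mul_inv]
            ring
        _ ≤ a ^ p * (M p)⁻¹ * q ^ (s * ((p * (p - 1) : ℕ) : ℝ) / 2) :=
            mul_le_mul_of_nonneg_right
              (mul_le_mul_of_nonneg_left hinv (by positivity)) hQ.le
        _ ≤ m p := hl
    · calc m p ≤ A ^ p * M p * q ^ (s * ((p * (p - 1) : ℕ) : ℝ) / 2) := hu
        _ ≤ A ^ p * (B ^ p * (p.factorial : ℝ) ^ β) * q ^ (s * ((p * (p - 1) : ℕ) : ℝ) / 2) :=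
            mul_le_mul_of_nonneg_right
              (mul_le_mul_of_nonneg_left hMub (by positivity)) hQ.le
        _ = (A * B) ^ p * (p.factorial : ℝ) ^ β * q ^ (s * ((p * (p - 1) : ℕ) : ℝ) / 2) := by
            rw [mul_pow]; ring
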